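/- Let |ψ₀⟩ = |0⟩ or |ψ₀⟩ = |1⟩, and let |ψ₁⟩ = √q|0⟩ + √(1−q)|1⟩ with q ∈ (0,1). Set ρ₀ = |ψ₀⟩⟨ψ₀| and ρ₁ = |ψ₁⟩⟨ψ₁|. Then for any ε ∈ (0,1) there exists n_ε such that for all n ≥ n_ε, inf{ Tr(Z[ρ₁^{⊗n}] E) : E Hermitian on (ℂ²)^{⊗n}, 0 ≤ E ≤ I, Tr(Z[ρ₀^{⊗n}] E) ≥ 1−ε } = 0. -/

import Mathlib

open Matrix Complex Set Filter

noncomputable section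

/-- Number of 1s in a bit string. -/
def ones {n : ℕ} (x : Fin n → Fin 2) : ℕ := (Finset.univ.filter fun i => x i = 1).card

/-- The `n`-fold tensor power of a one-qubit operator, as a matrix indexed by bit strings. -/
def mpow (n : ℕ) (ρ : Matrix (Fin 2) (Fin 2) ℂ) :
    Matrix (Fin n → Fin 2) (Fin n → Fin 2) ℂ :=
  Matrix.of fun x y => ∏ i, ρ (x i) (y i)

/-- The parity operator ω = σ_z^{⊗n}: it multiplies a computational basis vector by
(-1)^(number of 1s). -/
def parityOp (n : ℕ) : Matrix (Fin n → Fin 2) (Fin n → Fin 2) ℂ :=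
  Matrix.diagonal fun x => (-1 : ℂ) ^ ones x

/-- The ℤ₂-twirling Z[X] = ½ (X + ωXω). -/
def twirl {n : ℕ} (X : Matrix (Fin n → Fin 2) (Fin n → Fin 2) ℂ) :
    Matrix (Fin n → Fin 2) (Fin n → Fin 2) ℂ :=
  (2 : ℂ)⁻¹ • (X + parityOp n * X * parityOp n)

/-- Rank-one projection |ψ⟩⟨ψ| on one qubit. -/
def projv (ψ : Fin 2 → ℂ) : Matrix (Fin 2) (Fin 2) ℂ := vecMulVec ψ (star ψ)

/-- Rank-one projection |ψ⟩⟨ψ| on n qubits. -/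
def projN {n : ℕ} (ψ : (Fin n → Fin 2) → ℂ) :
    Matrix (Fin n → Fin 2) (Fin n → Fin 2) ℂ := vecMulVec ψ (star ψ)

def ket0 : Fin 2 → ℂ := ![1, 0]

def ket1 : Fin 2 → ℂ := ![0, 1]

/-- The qubit state √p |0⟩ + e^{iφ} √(1-p) |1⟩. -/
def qubit (p φ : ℝ) : Fin 2 → ℂ :=
  ![(Real.sqrt p : ℂ), Complex.exp (Complex.I * φ) * (Real.sqrt (1 - p) : ℂ)]

/-- The qubit state √p |0⟩ + √(1-p) |1⟩. -/
def qubitR (p : ℝ) : Fin 2 → ℂ := ![(Real.sqrt p : ℂ), (Real.sqrt (1 - p) : ℂ)]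

open scoped ComplexOrder

/-- The set of type-II error probabilities Tr(σ₁ E) over POVM elements 0 ≤ E ≤ I
(Loewner order) whose type-I error is at most ε, i.e. Tr(σ₀ E) ≥ 1-ε. -/
def errSet (n : ℕ) (σ0 σ1 : Matrix (Fin n → Fin 2) (Fin n → Fin 2) ℂ) (ε : ℝ) : Set ℝ :=
  { x | ∃ E : Matrix (Fin n → Fin 2) (Fin n → Fin 2) ℂ,
      E.IsHermitian ∧ E.PosSemidef ∧ (1 - E).PosSemidef ∧
      1 - ε ≤ ((σ0 * E).trace).re ∧ x = ((σ1 * E).trace).re }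

/-!
Twirling fixes `σ₀ = |w⟩⟨w|` with `w = ψ₀^{⊗n}`, since basis states are parity eigenvectors, and
turns `ρ₁^{⊗n}` into `σ₁ = ½(|u⟩⟨u| + |v⟩⟨v|)` with `u = ψ₁^{⊗n}` and `v = ωu = (σ_z ψ₁)^{⊗n}`.
The test `E = 1 - P`, where `P` is the orthogonal projection onto `span {u, v}`, has type-II
error `0`, and its type-I error `⟨w, P w⟩` is at most
`(|⟨u, w⟩|² + |⟨v, w⟩|²) / (1 - |⟨u, v⟩|) ≤ 2 max(q, 1 - q)ⁿ / (1 - |2q - 1|ⁿ) → 0`.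
Type-II errors are nonnegative, so for large `n` the infimum is attained at `0`.
-/

open scoped MatrixOrder
open Topology

namespace Matrix

variable {ι : Type*} [Fintype ι]

/-- The orthogonal projection onto `ℂ ∙ x` (`0` for `x = 0`, as `0⁻¹ = 0`). -/
def lineProj (x : ι → ℂ) : Matrix ι ι ℂ := (star x ⬝ᵥ x)⁻¹ • vecMulVec x (star x)

theorem lineProj_mulVec (x z : ι → ℂ) :
    lineProj x *ᵥ z = ((star x ⬝ᵥ z) / (star x ⬝ᵥ x)) • x := by
  rw [lineProj, smul_mulVec, vecMulVec_mulVec, op_smul_eq_smul, smul_smul, inv_mul_eq_div]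

theorem lineProj_mulVec_self (x : ι → ℂ) : lineProj x *ᵥ x = x := by
  rcases eq_or_ne x 0 with rfl | hx
  · simp [lineProj]
  · rw [lineProj_mulVec, div_self (dotProduct_star_self_eq_zero.not.mpr hx), one_smul]

theorem lineProj_mulVec_of_orthogonal {x z : ι → ℂ} (h : star x ⬝ᵥ z = 0) :
    lineProj x *ᵥ z = 0 := by
  rw [lineProj_mulVec, h, zero_div, zero_smul]

theorem lineProj_mul_lineProj_of_orthogonal {x y : ι → ℂ} (h : star x ⬝ᵥ y = 0) :
    lineProj x * lineProj y = 0 :=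
  ext_iff_mulVec.2 fun z => by
    rw [← mulVec_mulVec, lineProj_mulVec y, mulVec_smul, lineProj_mulVec_of_orthogonal h,
      smul_zero, zero_mulVec]

theorem isStarProjection_lineProj (x : ι → ℂ) : IsStarProjection (lineProj x) where
  isIdempotentElem := ext_iff_mulVec.2 fun z => by
    rw [← mulVec_mulVec, lineProj_mulVec x z, mulVec_smul, lineProj_mulVec_self]
  isSelfAdjoint := by
    rw [IsSelfAdjoint, lineProj, star_smul, star_inv₀, ← star_dotProduct, star_eq_conjTranspose,
      conjTranspose_vecMulVec, star_star]

theorem star_dotProduct_eq_ofReal {u v : ι → ℂ} {c : ℝ} (h : star u ⬝ᵥ v = c) :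
    star v ⬝ᵥ u = c := by
  rw [star_dotProduct, h, star_def, conj_ofReal]

/-- The orthogonal projection onto `span {u, v}` when `star u ⬝ᵥ u = star v ⬝ᵥ v` and
`star u ⬝ᵥ v` is real: then `u + v ⊥ u - v`. -/
def spanProj (u v : ι → ℂ) : Matrix ι ι ℂ := lineProj (u + v) + lineProj (u - v)

section spanProj

variable {u v : ι → ℂ} (hnorm : star u ⬝ᵥ u = star v ⬝ᵥ v)
  (hreal : star u ⬝ᵥ v = star v ⬝ᵥ u)
include hnorm hreal

theorem star_add_dotProduct_sub : star (u + v) ⬝ᵥ (u - v) = 0 := by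
  rw [star_add, add_dotProduct, dotProduct_sub, dotProduct_sub, hnorm, hreal]
  ring

theorem isStarProjection_spanProj : IsStarProjection (spanProj u v) :=
  (isStarProjection_lineProj _).add (isStarProjection_lineProj _)
    (lineProj_mul_lineProj_of_orthogonal (star_add_dotProduct_sub hnorm hreal))

theorem spanProj_mulVec_add : spanProj u v *ᵥ (u + v) = u + v := by
  have h : star (u - v) ⬝ᵥ (u + v) = 0 := by
    rw [star_dotProduct, star_add_dotProduct_sub hnorm hreal, star_zero]
  rw [spanProj, add_mulVec, lineProj_mulVec_self, lineProj_mulVec_of_orthogonal h, add_zero]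

theorem spanProj_mulVec_sub : spanProj u v *ᵥ (u - v) = u - v := by
  rw [spanProj, add_mulVec, lineProj_mulVec_self,
    lineProj_mulVec_of_orthogonal (star_add_dotProduct_sub hnorm hreal), zero_add]

theorem spanProj_mulVec_left : spanProj u v *ᵥ u = u := by
  have h : u = (2⁻¹ : ℂ) • ((u + v) + (u - v)) := by module
  conv_lhs => arg 2; rw [h]
  rw [mulVec_smul, mulVec_add, spanProj_mulVec_add hnorm hreal, spanProj_mulVec_sub hnorm hreal,
    ← h]

theorem spanProj_mulVec_right : spanProj u v *ᵥ v = v := by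
  have h : v = (2⁻¹ : ℂ) • ((u + v) - (u - v)) := by module
  conv_lhs => arg 2; rw [h]
  rw [mulVec_smul, mulVec_sub, spanProj_mulVec_add hnorm hreal, spanProj_mulVec_sub hnorm hreal,
    ← h]

end spanProj

theorem star_dotProduct_lineProj_mulVec (x w : ι → ℂ) :
    star w ⬝ᵥ (lineProj x *ᵥ w) = ((normSq (star x ⬝ᵥ w) / (star x ⬝ᵥ x).re : ℝ) : ℂ) := by
  have hx : ((star x ⬝ᵥ x).re : ℂ) = star x ⬝ᵥ x :=
    Complex.ext rfl ((Complex.nonneg_iff.1 (dotProduct_star_self_nonneg x)).2)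
  rw [lineProj_mulVec, dotProduct_smul, smul_eq_mul, star_dotProduct w x, ofReal_div,
    ← mul_conj, hx, star_def]
  ring

theorem re_star_dotProduct_spanProj_mulVec_le {u v : ι → ℂ} {c : ℝ} (hu : star u ⬝ᵥ u = 1)
    (hv : star v ⬝ᵥ v = 1) (huv : star u ⬝ᵥ v = c) (hc : |c| < 1) (w : ι → ℂ) :
    (star w ⬝ᵥ (spanProj u v *ᵥ w)).re ≤
      (normSq (star u ⬝ᵥ w) + normSq (star v ⬝ᵥ w)) / (1 - |c|) := by
  have hvu := star_dotProduct_eq_ofReal huv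
  have hadd : (star (u + v) ⬝ᵥ (u + v)).re = 2 + 2 * c := by
    simp only [star_add, add_dotProduct, dotProduct_add, hu, hv, huv, hvu, add_re, one_re,
      ofReal_re]
    ring
  have hsub : (star (u - v) ⬝ᵥ (u - v)).re = 2 - 2 * c := by
    simp only [star_sub, sub_dotProduct, dotProduct_sub, hu, hv, huv, hvu, sub_re, one_re,
      ofReal_re]
    ring
  obtain ⟨hc₁, hc₂⟩ := abs_lt.1 hc
  have hpos : 0 < 2 - 2 * |c| := by linarith
  rw [spanProj, add_mulVec, dotProduct_add, add_re, star_dotProduct_lineProj_mulVec,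
    star_dotProduct_lineProj_mulVec, ofReal_re, ofReal_re, hadd, hsub, star_add, add_dotProduct,
    star_sub, sub_dotProduct]
  calc normSq (star u ⬝ᵥ w + star v ⬝ᵥ w) / (2 + 2 * c)
        + normSq (star u ⬝ᵥ w - star v ⬝ᵥ w) / (2 - 2 * c)
      ≤ normSq (star u ⬝ᵥ w + star v ⬝ᵥ w) / (2 - 2 * |c|)
        + normSq (star u ⬝ᵥ w - star v ⬝ᵥ w) / (2 - 2 * |c|) := by
        gcongr
        · exact normSq_nonneg _
        · linarith [neg_abs_le c]
        · exact normSq_nonneg _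
        · linarith [le_abs_self c]
    _ = (normSq (star u ⬝ᵥ w) + normSq (star v ⬝ᵥ w)) / (1 - |c|) := by
        rw [normSq_add, normSq_sub]
        field_simp
        ring

theorem IsHermitian.mul_vecMulVec_star_mul {M : Matrix ι ι ℂ} (hM : M.IsHermitian) (x : ι → ℂ) :
    M * vecMulVec x (star x) * M = vecMulVec (M *ᵥ x) (star (M *ᵥ x)) := by
  rw [mul_vecMulVec, vecMulVec_mul, star_mulVec, hM.eq]

end Matrix

def tensorPowVec {κ : Type*} (n : ℕ) (ψ : κ → ℂ) : (Fin n → κ) → ℂ := fun x => ∏ i, ψ (x i)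

theorem star_tensorPowVec_dotProduct {κ : Type*} [Fintype κ] (n : ℕ) (a b : κ → ℂ) :
    star (tensorPowVec n a) ⬝ᵥ tensorPowVec n b = (star a ⬝ᵥ b) ^ n := by
  simp only [dotProduct, Pi.star_apply, tensorPowVec, star_prod, ← Finset.prod_mul_distrib]
  exact (Fintype.sum_pow (fun j => star (a j) * b j) n).symm

theorem tensorPowVec_neg {κ : Type*} (n : ℕ) (ψ : κ → ℂ) :
    tensorPowVec n (-ψ) = (-1 : ℂ) ^ n • tensorPowVec n ψ := by
  funext x
  simp [tensorPowVec, Finset.prod_neg]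

theorem mpow_projv (n : ℕ) (ψ : Fin 2 → ℂ) : mpow n (projv ψ) = projN (tensorPowVec n ψ) := by
  ext x y
  simp [mpow, projv, projN, tensorPowVec, vecMulVec_apply, star_prod, Finset.prod_mul_distrib]

theorem projN_neg_one_pow_smul {n : ℕ} (m : ℕ) (w : (Fin n → Fin 2) → ℂ) :
    projN ((-1 : ℂ) ^ m • w) = projN w := by
  rcases neg_one_pow_eq_or ℂ m with h | h <;> simp [h, projN]

theorem trace_projN_mul {n : ℕ} (w : (Fin n → Fin 2) → ℂ)
    (E : Matrix (Fin n → Fin 2) (Fin n → Fin 2) ℂ) :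
    (projN w * E).trace = star w ⬝ᵥ (E *ᵥ w) := by
  rw [projN, trace_mul_comm, mul_vecMulVec, trace_vecMulVec, dotProduct_comm]

def sigmaZ : Matrix (Fin 2) (Fin 2) ℂ := diagonal ![1, -1]

theorem neg_one_pow_ones {n : ℕ} (x : Fin n → Fin 2) :
    (-1 : ℂ) ^ ones x = ∏ i, ![1, -1] (x i) := by
  rw [ones, ← Finset.prod_const, Finset.prod_filter]
  refine Finset.prod_congr rfl fun i _ => ?_
  generalize x i = j
  fin_cases j <;> simp

theorem parityOp_mulVec_tensorPowVec (n : ℕ) (ψ : Fin 2 → ℂ) :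
    parityOp n *ᵥ tensorPowVec n ψ = tensorPowVec n (sigmaZ *ᵥ ψ) := by
  ext x
  simp only [parityOp, sigmaZ, mulVec_diagonal, tensorPowVec, neg_one_pow_ones,
    Finset.prod_mul_distrib]

theorem isHermitian_parityOp (n : ℕ) : (parityOp n).IsHermitian := by
  simp [parityOp, IsHermitian, diagonal_conjTranspose]

theorem twirl_mpow_projv (n : ℕ) (ψ : Fin 2 → ℂ) :
    twirl (mpow n (projv ψ)) =
      (2 : ℂ)⁻¹ • (projN (tensorPowVec n ψ) + projN (tensorPowVec n (sigmaZ *ᵥ ψ))) := by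
  rw [twirl, mpow_projv]
  unfold projN
  rw [(isHermitian_parityOp n).mul_vecMulVec_star_mul, parityOp_mulVec_tensorPowVec]

theorem twirl_mpow_projv_of_sigmaZ_mulVec {ψ : Fin 2 → ℂ} (n : ℕ)
    (hψ : sigmaZ *ᵥ ψ = ψ ∨ sigmaZ *ᵥ ψ = -ψ) :
    twirl (mpow n (projv ψ)) = projN (tensorPowVec n ψ) := by
  rw [twirl_mpow_projv]
  rcases hψ with h | h
  · rw [h]
    module
  · rw [h, tensorPowVec_neg, projN_neg_one_pow_smul]
    module

theorem trace_half_projN_add_mul {n : ℕ} (u v : (Fin n → Fin 2) → ℂ)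
    (E : Matrix (Fin n → Fin 2) (Fin n → Fin 2) ℂ) :
    ((2 : ℂ)⁻¹ • (projN u + projN v) * E).trace =
      2⁻¹ * (star u ⬝ᵥ (E *ᵥ u) + star v ⬝ᵥ (E *ᵥ v)) := by
  rw [smul_mul_assoc, add_mul, trace_smul, trace_add, trace_projN_mul, trace_projN_mul,
    smul_eq_mul]

theorem nonneg_of_mem_errSet_twirl {n : ℕ} {σ0 : Matrix (Fin n → Fin 2) (Fin n → Fin 2) ℂ}
    {ψ : Fin 2 → ℂ} {ε x : ℝ} (hx : x ∈ errSet n σ0 (twirl (mpow n (projv ψ))) ε) : 0 ≤ x := by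
  obtain ⟨E, -, hE, -, -, rfl⟩ := hx
  have h : 0 ≤ (twirl (mpow n (projv ψ)) * E).trace := by
    rw [twirl_mpow_projv, trace_half_projN_add_mul]
    exact mul_nonneg (inv_nonneg.2 zero_le_two)
      (add_nonneg (hE.dotProduct_mulVec_nonneg _) (hE.dotProduct_mulVec_nonneg _))
  exact (Complex.nonneg_iff.1 h).1

theorem zero_mem_errSet_projN {n : ℕ} {u v w : (Fin n → Fin 2) → ℂ} {c ε : ℝ}
    (hu : star u ⬝ᵥ u = 1) (hv : star v ⬝ᵥ v = 1) (hw : star w ⬝ᵥ w = 1)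
    (huv : star u ⬝ᵥ v = c) (hc : |c| < 1)
    (hε : (normSq (star u ⬝ᵥ w) + normSq (star v ⬝ᵥ w)) / (1 - |c|) ≤ ε) :
    0 ∈ errSet n (projN w) ((2 : ℂ)⁻¹ • (projN u + projN v)) ε := by
  have hnorm := hu.trans hv.symm
  have hreal := huv.trans (star_dotProduct_eq_ofReal huv).symm
  have hP := isStarProjection_spanProj hnorm hreal
  refine ⟨1 - spanProj u v, hP.one_sub.isSelfAdjoint, hP.one_sub_nonneg.posSemidef, ?_, ?_, ?_⟩
  · rw [sub_sub_cancel]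
    exact hP.nonneg.posSemidef
  · rw [trace_projN_mul, sub_mulVec, one_mulVec, dotProduct_sub, hw, sub_re, one_re]
    linarith [re_star_dotProduct_spanProj_mulVec_le hu hv huv hc w]
  · rw [trace_half_projN_add_mul, sub_mulVec, sub_mulVec, one_mulVec, one_mulVec,
      spanProj_mulVec_left hnorm hreal, spanProj_mulVec_right hnorm hreal]
    simp

section qubit

variable {q : ℝ} (hq0 : 0 ≤ q) (hq1 : q ≤ 1)
include hq0 hq1

theorem star_qubitR_dotProduct_self : star (qubitR q) ⬝ᵥ qubitR q = 1 := by
  simp [qubitR, dotProduct, Fin.sum_univ_two, ← ofReal_mul, hq0, hq1]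

theorem star_qubitR_dotProduct_sigmaZ_mulVec :
    star (qubitR q) ⬝ᵥ (sigmaZ *ᵥ qubitR q) = ((2 * q - 1 : ℝ) : ℂ) := by
  rw [show 2 * q - 1 = q - (1 - q) by ring]
  simp [qubitR, sigmaZ, dotProduct, Fin.sum_univ_two, mulVec_diagonal, ← ofReal_mul, hq0, hq1,
    sub_eq_add_neg]

theorem normSq_star_qubitR_dotProduct_le {ψ0 : Fin 2 → ℂ} (h0 : ψ0 = ket0 ∨ ψ0 = ket1) :
    normSq (star (qubitR q) ⬝ᵥ ψ0) ≤ max q (1 - q) ∧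
      normSq (star (sigmaZ *ᵥ qubitR q) ⬝ᵥ ψ0) ≤ max q (1 - q) := by
  rcases h0 with rfl | rfl <;>
    simp [qubitR, sigmaZ, ket0, ket1, dotProduct, Fin.sum_univ_two, hq0, hq1]

end qubit

theorem star_sigmaZ_mulVec_dotProduct (a b : Fin 2 → ℂ) :
    star (sigmaZ *ᵥ a) ⬝ᵥ (sigmaZ *ᵥ b) = star a ⬝ᵥ b := by
  simp [sigmaZ, dotProduct, Fin.sum_univ_two, mulVec_diagonal]

theorem sigmaZ_mulVec_basis {ψ0 : Fin 2 → ℂ} (h0 : ψ0 = ket0 ∨ ψ0 = ket1) :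
    sigmaZ *ᵥ ψ0 = ψ0 ∨ sigmaZ *ᵥ ψ0 = -ψ0 := by
  rcases h0 with rfl | rfl
  · left
    ext i
    fin_cases i <;> simp [sigmaZ, ket0, mulVec_diagonal]
  · right
    ext i
    fin_cases i <;> simp [sigmaZ, ket1, mulVec_diagonal]

theorem zero_mem_errSet {ψ0 : Fin 2 → ℂ} (h0 : ψ0 = ket0 ∨ ψ0 = ket1) {q : ℝ} (hq0 : 0 ≤ q)
    (hq1 : q ≤ 1) {n : ℕ} (hc : |2 * q - 1| ^ n < 1) {ε : ℝ}
    (hε : 2 * max q (1 - q) ^ n / (1 - |2 * q - 1| ^ n) ≤ ε) :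
    0 ∈ errSet n (twirl (mpow n (projv ψ0))) (twirl (mpow n (projv (qubitR q)))) ε := by
  have hψ0 : star ψ0 ⬝ᵥ ψ0 = 1 := by
    rcases h0 with rfl | rfl <;> simp [ket0, ket1, dotProduct]
  obtain ⟨hψu, hψv⟩ := normSq_star_qubitR_dotProduct_le hq0 hq1 h0
  rw [twirl_mpow_projv_of_sigmaZ_mulVec n (sigmaZ_mulVec_basis h0), twirl_mpow_projv]
  refine zero_mem_errSet_projN (c := (2 * q - 1) ^ n) ?_ ?_ ?_ ?_ (by rwa [abs_pow]) ?_
  · rw [star_tensorPowVec_dotProduct, star_qubitR_dotProduct_self hq0 hq1, one_pow]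
  · rw [star_tensorPowVec_dotProduct, star_sigmaZ_mulVec_dotProduct,
      star_qubitR_dotProduct_self hq0 hq1, one_pow]
  · rw [star_tensorPowVec_dotProduct, hψ0, one_pow]
  · rw [star_tensorPowVec_dotProduct, star_qubitR_dotProduct_sigmaZ_mulVec hq0 hq1, ofReal_pow]
  · rw [abs_pow]
    refine (div_le_div_of_nonneg_right ?_ (by linarith)).trans hε
    rw [star_tensorPowVec_dotProduct, star_tensorPowVec_dotProduct, map_pow, map_pow, two_mul]
    gcongr <;> exact normSq_nonneg _

/-- For |ψ₀⟩ ∈ {|0⟩, |1⟩} and |ψ₁⟩ = √q|0⟩+√(1-q)|1⟩ with q ∈ (0,1),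
for any ε ∈ (0,1) there is n_ε such that for all n ≥ n_ε the minimal type-II error
probability under ℤ₂-invariant measurements with type-I error at most ε is zero. -/
theorem typeII_error_vanishes_basis_null (ψ0 : Fin 2 → ℂ) (h0 : ψ0 = ket0 ∨ ψ0 = ket1)
    (q : ℝ) (hq : q ∈ Set.Ioo (0 : ℝ) 1) :
    ∀ ε ∈ Set.Ioo (0 : ℝ) 1, ∃ nε : ℕ, ∀ n : ℕ, nε ≤ n →
      sInf (errSet n (twirl (mpow n (projv ψ0))) (twirl (mpow n (projv (qubitR q)))) ε)
        = 0 := by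
  rintro ε ⟨hε, -⟩
  obtain ⟨hq0, hq1⟩ := hq
  have hr : max q (1 - q) < 1 := max_lt hq1 (by linarith)
  have hc : |2 * q - 1| < 1 := abs_lt.2 ⟨by linarith, by linarith⟩
  have hlim :
      Tendsto (fun n : ℕ => 2 * max q (1 - q) ^ n / (1 - |2 * q - 1| ^ n)) atTop (𝓝 0) := by
    have h1 := tendsto_pow_atTop_nhds_zero_of_lt_one (le_max_of_le_left hq0.le) hr
    have h2 := tendsto_pow_atTop_nhds_zero_of_lt_one (abs_nonneg (2 * q - 1)) hc
    have h := (h1.const_mul 2).div (tendsto_const_nhds.sub h2) (by norm_num : (1 : ℝ) - 0 ≠ 0)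
    rwa [mul_zero, sub_zero, zero_div] at h
  obtain ⟨N, hN⟩ :=
    eventually_atTop.1 ((hlim.eventually (ge_mem_nhds hε)).and (eventually_ge_atTop 1))
  refine ⟨N, fun n hn => ?_⟩
  obtain ⟨hsmall, hn1⟩ := hN n hn
  have hcn : |2 * q - 1| ^ n < 1 := pow_lt_one₀ (abs_nonneg _) hc (by omega)
  exact IsLeast.csInf_eq ⟨zero_mem_errSet h0 hq0.le hq1.le hcn hsmall,
    fun _ hx => nonneg_of_mem_errSet_twirl hx⟩
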